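/- arXiv:2212.06293 — 3 statements merged into one kernel-verified Lean document; each statement's English description precedes it below -/
import Mathlib

section
/- Let E be a real separated locally convex space and K a nontrivial cone with compact base B_K. If x* ∈ E* satisfies x*(x) > 0 for all x ∈ B_K, then for every y* ∈ E* there exists ε > 0 such that (x* + λ y*)(k) ≥ 0 for all λ ∈ [0, ε] and all k ∈ K; in particular x* lies in the algebraic interior of the topological dual cone K⁺_τ. -/
/-! A functional that is positive on the compact base is bounded below there by some `m > 0`,
while any other functional `y*` is bounded in absolute value there by some `C`; so
`x* + t y*` stays nonnegative on the base for `0 ≤ t ≤ m / (|C| + 1)`, hence on the cone it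
generates. -/

open Set

theorem IsCompact.exists_pos_forall_nonneg_add_mul {X : Type*} [TopologicalSpace X] {B : Set X}
    (hB : IsCompact B) {f g : X → ℝ} (hf : ContinuousOn f B) (hg : ContinuousOn g B)
    (hpos : ∀ x ∈ B, 0 < f x) :
    ∃ ε > 0, ∀ t ∈ Icc (0 : ℝ) ε, ∀ x ∈ B, 0 ≤ f x + t * g x := by
  obtain ⟨m, hm, hfm⟩ := hB.exists_forall_le' hf hpos
  obtain ⟨C, hC⟩ := hB.exists_bound_of_continuousOn hg
  refine ⟨m / (|C| + 1), by positivity, ?_⟩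
  rintro t ⟨ht0, htε⟩ x hx
  have hgx : |g x| ≤ |C| + 1 := by
    linarith [le_abs_self C, Real.norm_eq_abs (g x) ▸ hC x hx]
  have hperturb : |t * g x| ≤ m :=
    calc |t * g x| = t * |g x| := by rw [abs_mul, abs_of_nonneg ht0]
      _ ≤ m / (|C| + 1) * (|C| + 1) := mul_le_mul htε hgx (abs_nonneg _) (by positivity)
      _ = m := div_mul_cancel₀ m (by positivity)
  linarith [neg_abs_le (t * g x), hfm x hx]

theorem stmt_7_general {E : Type*} [AddCommGroup E] [Module ℝ E] [TopologicalSpace E]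
    (K : Set E) (BK : Set E) (hBKcompact : IsCompact BK)
    (hgen : K = {x : E | ∃ t : ℝ, 0 ≤ t ∧ ∃ b ∈ BK, x = t • b})
    (xs : E →L[ℝ] ℝ) (hpos : ∀ x ∈ BK, 0 < xs x) :
    (∀ ys : E →L[ℝ] ℝ, ∃ ε > (0 : ℝ), ∀ t ∈ Set.Icc (0 : ℝ) ε,
        ∀ k ∈ K, 0 ≤ (xs + t • ys) k) ∧
    (∀ k ∈ K, 0 ≤ xs k) := by
  have hperturb : ∀ ys : E →L[ℝ] ℝ, ∃ ε > (0 : ℝ), ∀ t ∈ Icc (0 : ℝ) ε,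
      ∀ k ∈ K, 0 ≤ (xs + t • ys) k := by
    intro ys
    obtain ⟨ε, hε, hbase⟩ := hBKcompact.exists_pos_forall_nonneg_add_mul
      xs.continuous.continuousOn ys.continuous.continuousOn hpos
    refine ⟨ε, hε, fun t ht k hk => ?_⟩
    obtain ⟨s, hs, b, hb, rfl⟩ := hgen ▸ hk
    have := mul_nonneg hs (hbase t ht b hb)
    simpa only [add_apply, smul_apply, map_smul, smul_eq_mul, mul_add, mul_left_comm s t]
      using this
  refine ⟨hperturb, fun k hk => ?_⟩
  obtain ⟨ε, hε, hnonneg⟩ := hperturb 0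
  simpa using hnonneg 0 ⟨le_rfl, hε.le⟩ k hk

/-- If xs is positive on a compact base B_K of a nontrivial cone K, then
xs lies in the algebraic interior of the topological dual cone K⁺_τ. -/
theorem stmt_7 {E : Type*} [AddCommGroup E] [Module ℝ E] [TopologicalSpace E]
    [IsTopologicalAddGroup E] [ContinuousSMul ℝ E] [LocallyConvexSpace ℝ E]
    [T2Space E]
    (K : Set E) (hK0 : (0 : E) ∈ K)
    (hKcone : ∀ t : ℝ, 0 ≤ t → ∀ x ∈ K, t • x ∈ K)
    (hKne : K ≠ {0}) (hKneE : K ≠ Set.univ)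
    (BK : Set E) (hBKsub : BK ⊆ K \ {0}) (hBKne : BK.Nonempty)
    (hBKcompact : IsCompact BK)
    (hgen : K = {x : E | ∃ t : ℝ, 0 ≤ t ∧ ∃ b ∈ BK, x = t • b})
    (xs : E →L[ℝ] ℝ) (hpos : ∀ x ∈ BK, 0 < xs x) :
    (∀ ys : E →L[ℝ] ℝ, ∃ ε > (0 : ℝ), ∀ t ∈ Set.Icc (0 : ℝ) ε,
        ∀ k ∈ K, 0 ≤ (xs + t • ys) k) ∧
    (∀ k ∈ K, 0 ≤ xs k) :=
  stmt_7_general K BK hBKcompact hgen xs hpos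
end

section
/- Let E be a real topological vector space, K a nontrivial cone with compact normlike-base B_K (w.r.t. a seminorm ψ positive on K\{0}). Then the algebraic interior of the topological augmented dual cone K^{a+}_τ := {(x*, α) ∈ K⁺_τ × ℝ₊ | x*(y) ≥ α for all y ∈ B_K} equals {(x*, α) ∈ K⁺_τ × (0,∞) | x*(y) > α for all y ∈ B_K}. -/
/-!
Since `K` is generated by `B_K`, a pair `(x*, α)` with `α ≥ 0` and `x* ≥ α` on `B_K` is
automatically nonnegative on `K`. Moving along the directions `(0, ∓1)` shows that core points
satisfy the strict inequalities. Conversely, if `α > 0` and `x* - α > 0` on the compact set `B_K`,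
then for a direction `(y*, β)` the perturbation `x* - α + t (y* - β)` stays positive on `B_K`
for all small `t ≥ 0` by the tube lemma.
-/

open Set Filter Topology

section AlgebraicInterior

variable {V : Type*} [AddCommGroup V] [Module ℝ V]

def algebraicInterior (S : Set V) : Set V :=
  {p ∈ S | ∀ q : V, ∃ ε > (0 : ℝ), ∀ t ∈ Icc (0 : ℝ) ε, p + t • q ∈ S}

theorem exists_pos_add_smul_mem_of_mem_algebraicInterior {S : Set V} {p : V}
    (hp : p ∈ algebraicInterior S) (q : V) :
    ∃ ε > (0 : ℝ), p + ε • q ∈ S :=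
  let ⟨ε, hε, h⟩ := hp.2 q
  ⟨ε, hε, h ε ⟨hε.le, le_rfl⟩⟩

theorem mem_algebraicInterior_of_eventually {S : Set V} {p : V}
    (h : ∀ q : V, ∀ᶠ t in 𝓝 (0 : ℝ), p + t • q ∈ S) :
    p ∈ algebraicInterior S := by
  refine ⟨by simpa using (h 0).self_of_nhds, fun q => ?_⟩
  obtain ⟨ε, hε, hsub⟩ :=
    mem_nhdsGE_iff_exists_Icc_subset.mp (nhdsWithin_le_nhds (h q))
  exact ⟨ε, hε, hsub⟩

end AlgebraicInterior

theorem IsCompact.eventually_forall_pos_add_mul {X : Type*} [TopologicalSpace X] {B : Set X}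
    (hB : IsCompact B) {u v : X → ℝ} (hu : Continuous u) (hv : Continuous v)
    (hpos : ∀ y ∈ B, 0 < u y) :
    ∀ᶠ t in 𝓝 (0 : ℝ), ∀ y ∈ B, 0 < u y + t * v y :=
  hB.eventually_forall_of_forall_eventually fun y hy =>
    (isOpen_lt continuous_const (by fun_prop)).mem_nhds (by simpa using hpos y hy)

section AugmentedDualCone

variable {E : Type*} [AddCommGroup E] [Module ℝ E] [TopologicalSpace E]

def augmentedDualCone (K B : Set E) : Set ((E →L[ℝ] ℝ) × ℝ) :=
  {p | (∀ k ∈ K, 0 ≤ p.1 k) ∧ 0 ≤ p.2 ∧ ∀ y ∈ B, p.2 ≤ p.1 y}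

variable {K B : Set E}

theorem mem_augmentedDualCone_of_le_on_base
    (hK : K ⊆ {x | ∃ t : ℝ, 0 ≤ t ∧ ∃ b ∈ B, x = t • b})
    {p : (E →L[ℝ] ℝ) × ℝ}
    (hα : 0 ≤ p.2) (hB : ∀ y ∈ B, p.2 ≤ p.1 y) : p ∈ augmentedDualCone K B := by
  refine ⟨fun k hk => ?_, hα, hB⟩
  obtain ⟨t, ht, b, hb, rfl⟩ := hK hk
  rw [map_smul, smul_eq_mul]
  exact mul_nonneg ht (hα.trans (hB b hb))

theorem strict_of_mem_algebraicInterior_augmentedDualCone {f : E →L[ℝ] ℝ} {α : ℝ}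
    (hp : (f, α) ∈ algebraicInterior (augmentedDualCone K B)) :
    0 < α ∧ ∀ y ∈ B, α < f y := by
  obtain ⟨ε, hε, -, hdown, -⟩ := exists_pos_add_smul_mem_of_mem_algebraicInterior hp (0, -1)
  obtain ⟨δ, hδ, -, -, hup⟩ := exists_pos_add_smul_mem_of_mem_algebraicInterior hp (0, 1)
  simp only [Prod.smul_mk, Prod.mk_add_mk, smul_zero, add_zero, smul_eq_mul] at hdown hup
  exact ⟨by linarith, fun y hy => by linarith [hup y hy]⟩

theorem mem_algebraicInterior_augmentedDualCone
    (hK : K ⊆ {x | ∃ t : ℝ, 0 ≤ t ∧ ∃ b ∈ B, x = t • b}) (hB : IsCompact B)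
    {f : E →L[ℝ] ℝ} {α : ℝ} (hα : 0 < α) (hf : ∀ y ∈ B, α < f y) :
    (f, α) ∈ algebraicInterior (augmentedDualCone K B) := by
  refine mem_algebraicInterior_of_eventually fun ⟨g, β⟩ => ?_
  have hlevel : ∀ᶠ t in 𝓝 (0 : ℝ), 0 < α + t * β :=
    ContinuousAt.eventually_lt (f := fun _ => 0) (by fun_prop) (by fun_prop) (by simpa using hα)
  have hbase : ∀ᶠ t in 𝓝 (0 : ℝ), ∀ y ∈ B, 0 < (f y - α) + t * (g y - β) :=
    hB.eventually_forall_pos_add_mul (by fun_prop) (by fun_prop) fun y hy => sub_pos.mpr (hf y hy)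
  filter_upwards [hlevel, hbase] with t hlevel hbase
  refine mem_augmentedDualCone_of_le_on_base hK ?_ fun y hy => ?_
  · simpa using hlevel.le
  · have := hbase y hy
    simp only [Prod.smul_mk, Prod.mk_add_mk, smul_eq_mul, add_apply, smul_apply]
    linarith

end AugmentedDualCone

theorem stmt_15_general {E : Type*} [AddCommGroup E] [Module ℝ E] [TopologicalSpace E]
    (K : Set E)
    (BK : Set E)
    (hgen : K = {x : E | ∃ t : ℝ, 0 ≤ t ∧ ∃ b ∈ BK, x = t • b})
    (hBKcompact : IsCompact BK)
    (Ka : Set ((E →L[ℝ] ℝ) × ℝ))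
    (hKa : Ka = {p : (E →L[ℝ] ℝ) × ℝ | (∀ k ∈ K, 0 ≤ p.1 k) ∧ 0 ≤ p.2 ∧
      ∀ y ∈ BK, p.2 ≤ p.1 y}) :
    {p ∈ Ka | ∀ q : (E →L[ℝ] ℝ) × ℝ, ∃ ε > (0 : ℝ),
        ∀ t ∈ Set.Icc (0 : ℝ) ε, p + t • q ∈ Ka}
      = {p : (E →L[ℝ] ℝ) × ℝ | (∀ k ∈ K, 0 ≤ p.1 k) ∧ 0 < p.2 ∧
          ∀ y ∈ BK, p.2 < p.1 y} := by
  subst hKa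
  show algebraicInterior (augmentedDualCone K BK) = _
  ext ⟨f, α⟩
  constructor
  · intro hp
    exact ⟨hp.1.1, strict_of_mem_algebraicInterior_augmentedDualCone hp⟩
  · rintro ⟨-, hα, hf⟩
    exact mem_algebraicInterior_augmentedDualCone hgen.subset hBKcompact hα hf

/-- For a compact normlike-base B_K, the algebraic interior of
K^{a+}_τ equals {(x*, α) ∈ K⁺_τ × ℙ | x*(y) > α ∀ y ∈ B_K}. -/
theorem stmt_15 {E : Type*} [AddCommGroup E] [Module ℝ E] [TopologicalSpace E]
    [IsTopologicalAddGroup E] [ContinuousSMul ℝ E] (ψ : E → ℝ)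
    (hψ_add : ∀ x y : E, ψ (x + y) ≤ ψ x + ψ y)
    (hψ_smul : ∀ t : ℝ, 0 ≤ t → ∀ x : E, ψ (t • x) = t * ψ x)
    (hψ_symm : ∀ x : E, ψ (-x) = ψ x)
    (K : Set E) (hK0 : (0 : E) ∈ K)
    (hKcone : ∀ t : ℝ, 0 ≤ t → ∀ x ∈ K, t • x ∈ K)
    (hKne : K ≠ {0}) (hKneE : K ≠ Set.univ)
    (hψpos : ∀ x ∈ K, x ≠ 0 → 0 < ψ x)
    (BK : Set E) (hBK : BK = {x ∈ K | ψ x = 1})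
    (hgen : K = {x : E | ∃ t : ℝ, 0 ≤ t ∧ ∃ b ∈ BK, x = t • b})
    (hBKcompact : IsCompact BK)
    (Ka : Set ((E →L[ℝ] ℝ) × ℝ))
    (hKa : Ka = {p : (E →L[ℝ] ℝ) × ℝ | (∀ k ∈ K, 0 ≤ p.1 k) ∧ 0 ≤ p.2 ∧
      ∀ y ∈ BK, p.2 ≤ p.1 y}) :
    {p ∈ Ka | ∀ q : (E →L[ℝ] ℝ) × ℝ, ∃ ε > (0 : ℝ),
        ∀ t ∈ Set.Icc (0 : ℝ) ε, p + t • q ∈ Ka}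
      = {p : (E →L[ℝ] ℝ) × ℝ | (∀ k ∈ K, 0 ≤ p.1 k) ∧ 0 < p.2 ∧
          ∀ y ∈ BK, p.2 < p.1 y} :=
  stmt_15_general K BK hgen hBKcompact Ka hKa
end

section
/- (Proper cone separation) Let E be a real vector space, ψ a seminorm, K, A nontrivial cones with normlike-bases B_K, B_A, and suppose S_{−K} := conv(−B_K) has nonempty algebraic interior with S_A^0 ∩ cor(S_{−K}) = ∅, where S_A^0 := conv(B_A ∪ {0}). Then there exist a linear x' ∈ K⁺ \ {0} and α ≥ 0 such that x'(a) + αψ(a) ≥ 0 for all a ∈ A, x'(k) + αψ(k) ≤ 0 for all k ∈ −K, and x'(k) + αψ(k) < 0 for all k ∈ cor(−K). In particular A ∩ cor(−K) = ∅. -/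
/-! The core of `S_{-K}` is convex and algebraically open, so the gauge of a translate of
`cor S_{-K} - S_A^0` and the Hahn–Banach extension theorem give a linear functional `x'` and a
level `-α` separating `S_{-K}` from `S_A^0`, with a core point `s₀` of `S_{-K}` strictly below the
level; `α ≥ 0` because `0 ∈ S_A^0`. Then `x' ≥ α` on `B_K` and `x' ≥ -α` on `B_A`, and positive
homogeneity spreads this to `x' ≥ αψ` on `K` and `x' ≥ -αψ` on `A`. If `x' = αψ` at a core point `x`
of `K`, then comparing `x` with `x + εv ∈ K` through the triangle inequality for `ψ` gives
`x'(v) + αψ(v) ≥ 0` for every `v`, which fails at `v = s₀` since `ψ(s₀) ≤ 1`. -/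

open Set

section AlgebraicCore

variable {E : Type*} [AddCommGroup E] [Module ℝ E] {S : Set E}

def algCore (S : Set E) : Set E :=
  {x ∈ S | ∀ v : E, ∃ ε > (0 : ℝ), ∀ t ∈ Icc (0 : ℝ) ε, x + t • v ∈ S}

theorem Convex.combo_algCore_mem_algCore (hS : Convex ℝ S) {x y : E} (hx : x ∈ algCore S)
    (hy : y ∈ S) {l : ℝ} (hl₀ : 0 < l) (hl₁ : l ≤ 1) : l • x + (1 - l) • y ∈ algCore S := by
  refine ⟨hS hx.1 hy hl₀.le (by linarith) (by ring), fun v => ?_⟩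
  obtain ⟨ε, hε, hxv⟩ := hx.2 v
  refine ⟨l * ε, mul_pos hl₀ hε, fun t ht => ?_⟩
  have hmem : x + (t / l) • v ∈ S :=
    hxv _ ⟨div_nonneg ht.1 hl₀.le, (div_le_iff₀' hl₀).2 ht.2⟩
  have hcombo : l • x + (1 - l) • y + t • v = l • (x + (t / l) • v) + (1 - l) • y := by
    rw [smul_add, smul_smul, mul_div_cancel₀ _ hl₀.ne']
    abel
  rw [hcombo]
  exact hS hmem hy hl₀.le (by linarith) (by ring)

protected theorem Convex.algCore (hS : Convex ℝ S) : Convex ℝ (algCore S) := by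
  intro x hx y hy a b ha hb hab
  obtain rfl | ha₀ := ha.eq_or_lt
  · obtain rfl : b = 1 := by linarith
    simpa using hy
  · obtain rfl : b = 1 - a := by linarith
    exact hS.combo_algCore_mem_algCore hx hy.1 ha₀ (by linarith)

theorem Convex.algCore_algCore (hS : Convex ℝ S) : algCore (algCore S) = algCore S := by
  refine Subset.antisymm (fun x hx => hx.1) fun x hx => ⟨hx, fun v => ?_⟩
  obtain ⟨ε, hε, hxv⟩ := hx.2 v
  refine ⟨ε / 2, by positivity, fun t ht => ?_⟩
  have hcombo : x + t • v = (1 - t / ε) • x + (1 - (1 - t / ε)) • (x + ε • v) := by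
    rw [sub_sub_cancel, smul_add, smul_smul, div_mul_cancel₀ t hε.ne', ← add_assoc, ← add_smul,
      sub_add_cancel, one_smul]
  have hle : t / ε ≤ 1 / 2 := by rw [div_le_iff₀ hε]; linarith [ht.2]
  rw [hcombo]
  exact hS.combo_algCore_mem_algCore hx (hxv ε ⟨hε.le, le_rfl⟩) (by linarith)
    (by linarith [div_nonneg ht.1 hε.le])

theorem absorbent_of_zero_mem_algCore (h : (0 : E) ∈ algCore S) : Absorbent ℝ S := by
  refine absorbent_iff_eventually_nhdsNE_zero.2 fun x => nhdsWithin_le_nhds ?_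
  obtain ⟨ε₁, hε₁, hx⟩ := h.2 x
  obtain ⟨ε₂, hε₂, hnx⟩ := h.2 (-x)
  filter_upwards [Ioo_mem_nhds (neg_lt_zero.2 hε₂) hε₁] with c hc
  rcases le_or_gt 0 c with hc₀ | hc₀
  · simpa using hx c ⟨hc₀, hc.2.le⟩
  · simpa using hnx (-c) ⟨by linarith, by linarith [hc.1]⟩

theorem LinearMap.le_of_le_on_algCore (f : E →ₗ[ℝ] ℝ) {c : ℝ} (hS : Convex ℝ S) {x₀ : E}
    (hx₀ : x₀ ∈ algCore S) (hf : ∀ x ∈ algCore S, f x ≤ c) {x : E} (hx : x ∈ S) : f x ≤ c := by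
  have hclosed : IsClosed {l : ℝ | l * f x₀ + (1 - l) * f x ≤ c} :=
    isClosed_le (by fun_prop) continuous_const
  have hIoc : Ioc (0 : ℝ) 1 ⊆ {l : ℝ | l * f x₀ + (1 - l) * f x ≤ c} := fun l hl => by
    simpa using hf _ (hS.combo_algCore_mem_algCore hx₀ hx hl.1 hl.2)
  have h₀ := hclosed.closure_subset_iff.2 hIoc
    (by rw [closure_Ioc zero_ne_one]; exact ⟨le_rfl, zero_le_one⟩)
  simpa using h₀

theorem separate_convex_of_zero_mem_algCore (hS₀ : (0 : E) ∈ algCore S) (hS : Convex ℝ S)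
    {x₀ : E} (hx₀ : x₀ ∉ S) : ∃ f : E →ₗ[ℝ] ℝ, f x₀ = 1 ∧ ∀ x ∈ S, f x ≤ 1 := by
  have hS_abs := absorbent_of_zero_mem_algCore hS₀
  have hx₀_ne : x₀ ≠ 0 := (ne_of_mem_of_not_mem hS₀.1 hx₀).symm
  let f : E →ₗ.[ℝ] ℝ := LinearPMap.mkSpanSingleton x₀ 1 hx₀_ne
  obtain ⟨φ, hφf, hφ_le⟩ := exists_extension_of_le_sublinear f (gauge S)
    (fun c hc => gauge_smul_of_nonneg hc.le) (gauge_add_le hS hS_abs) <| by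
      rintro ⟨x, hx⟩
      obtain ⟨y, rfl⟩ := Submodule.mem_span_singleton.1 hx
      rw [LinearPMap.mkSpanSingleton'_apply, smul_eq_mul, mul_one]
      obtain hy | hy := le_or_gt y 0
      · exact hy.trans (gauge_nonneg _)
      · rw [gauge_smul_of_nonneg hy.le, smul_eq_mul, RingHom.id_apply, le_mul_iff_one_le_right hy]
        exact one_le_gauge_of_notMem (hS.starConvex hS₀.1) (hS_abs x₀) hx₀
  refine ⟨φ, ?_, fun x hx => (hφ_le x).trans (gauge_le_one_of_mem hx)⟩
  exact (hφf ⟨x₀, Submodule.mem_span_singleton_self _⟩).trans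
    (LinearPMap.mkSpanSingleton_apply ℝ ℝ hx₀_ne 1)

open scoped Pointwise in
theorem geometric_hahn_banach_algCore {T : Set E} (hS : Convex ℝ S) (hT : Convex ℝ T)
    {s₀ t₀ : E} (hs₀ : s₀ ∈ algCore S) (ht₀ : t₀ ∈ T) (hdisj : Disjoint (algCore S) T) :
    ∃ (f : E →ₗ[ℝ] ℝ) (c : ℝ), (∀ s ∈ S, f s ≤ c) ∧ (∀ t ∈ T, c ≤ f t) ∧ f s₀ < c := by
  have hs₀' : s₀ ∈ algCore (algCore S) := hS.algCore_algCore.symm ▸ hs₀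
  set U := (t₀ - s₀) +ᵥ (algCore S - T)
  have hU₀ : (0 : E) ∈ algCore U := by
    refine ⟨⟨s₀ - t₀, sub_mem_sub hs₀ ht₀, by simp [vadd_eq_add]⟩, fun v => ?_⟩
    obtain ⟨ε, hε, hv⟩ := hs₀'.2 v
    exact ⟨ε, hε, fun t ht => ⟨_, sub_mem_sub (hv t ht) ht₀, by simp [vadd_eq_add]⟩⟩
  have hx₀ : t₀ - s₀ ∉ U := by
    rintro ⟨_, ⟨s, hs, t, ht, rfl⟩, hst⟩
    simp only [vadd_eq_add, add_eq_left, sub_eq_zero] at hst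
    exact hdisj.ne_of_mem hs ht hst
  obtain ⟨f, hf₁, hfU⟩ := separate_convex_of_zero_mem_algCore hU₀ ((hS.algCore.sub hT).vadd _) hx₀
  have hle : ∀ s ∈ algCore S, ∀ t ∈ T, f s ≤ f t := fun s hs t ht => by
    have := hfU _ ⟨s - t, sub_mem_sub hs ht, rfl⟩
    simp only [vadd_eq_add, map_add, map_sub, hf₁] at this ⊢
    linarith
  have hbdd : BddAbove (f '' algCore S) := ⟨f t₀, forall_mem_image.2 fun s hs => hle s hs t₀ ht₀⟩
  refine ⟨f, sSup (f '' algCore S), fun s hs => f.le_of_le_on_algCore hS hs₀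
    (fun s hs => le_csSup hbdd (mem_image_of_mem f hs)) hs,
    fun t ht => csSup_le ⟨_, mem_image_of_mem f hs₀⟩ (forall_mem_image.2 fun s hs => hle s hs t ht),
    ?_⟩
  obtain ⟨ε, hε, hmove⟩ := hs₀'.2 (t₀ - s₀)
  calc f s₀ < f (s₀ + ε • (t₀ - s₀)) := by simpa [hf₁] using hε
    _ ≤ _ := le_csSup hbdd (mem_image_of_mem f (hmove ε ⟨hε.le, le_rfl⟩))

end AlgebraicCore

section ConeBase

variable {E : Type*} [AddCommGroup E] [Module ℝ E]

def Seminorm.ofNonnegSMul (ψ : E → ℝ) (add_le : ∀ x y, ψ (x + y) ≤ ψ x + ψ y)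
    (smul : ∀ t : ℝ, 0 ≤ t → ∀ x, ψ (t • x) = t * ψ x) (neg : ∀ x, ψ (-x) = ψ x) :
    Seminorm ℝ E :=
  Seminorm.of ψ add_le fun a x => by
    rcases le_or_gt 0 a with ha | ha
    · rw [smul a ha, Real.norm_of_nonneg ha]
    · rw [Real.norm_eq_abs, abs_of_neg ha, ← smul (-a) (by linarith), neg_smul, neg]

variable (p : Seminorm ℝ E) {g : E →ₗ[ℝ] ℝ} {α : ℝ}

theorem mul_le_of_le_on_base {B : Set E} (hB : ∀ b ∈ B, p b = 1) (hg : ∀ b ∈ B, α ≤ g b)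
    {x : E} (hx : ∃ t : ℝ, 0 ≤ t ∧ ∃ b ∈ B, x = t • b) : α * p x ≤ g x := by
  obtain ⟨t, ht, b, hb, rfl⟩ := hx
  rw [map_smul_eq_mul, map_smul, smul_eq_mul, Real.norm_of_nonneg ht, hB b hb, mul_one,
    mul_comm]
  exact mul_le_mul_of_nonneg_left (hg b hb) ht

theorem mul_lt_of_mem_algCore {K : Set E} (hα : 0 ≤ α) (hK : ∀ y ∈ K, α * p y ≤ g y) {v : E}
    (hv : g v + α * p v < 0) {x : E} (hx : x ∈ algCore K) : α * p x < g x := by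
  by_contra! hgx
  obtain ⟨ε, hε, hxv⟩ := hx.2 v
  have hKxv := hK _ (hxv ε ⟨hε.le, le_rfl⟩)
  have htri : p x ≤ p (x + ε • v) + ε * p v := by
    simpa [map_smul_eq_mul, abs_of_pos hε] using map_sub_le_add p (x + ε • v) (ε • v)
  rw [g.map_add, g.map_smul, smul_eq_mul] at hKxv
  nlinarith [mul_le_mul_of_nonneg_left htri hα, mul_neg_of_pos_of_neg hε hv]

end ConeBase

theorem stmt_17_general {E : Type*} [AddCommGroup E] [Module ℝ E] (ψ : E → ℝ)
    (hψ_add : ∀ x y : E, ψ (x + y) ≤ ψ x + ψ y)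
    (hψ_smul : ∀ t : ℝ, 0 ≤ t → ∀ x : E, ψ (t • x) = t * ψ x)
    (hψ_symm : ∀ x : E, ψ (-x) = ψ x)
    (K A : Set E)
    (BK BA : Set E)
    (hBK : BK = {x ∈ K | ψ x = 1}) (hBA : BA = {x ∈ A | ψ x = 1})
    (hgenK : K = {x : E | ∃ t : ℝ, 0 ≤ t ∧ ∃ b ∈ BK, x = t • b})
    (hgenA : A = {x : E | ∃ t : ℝ, 0 ≤ t ∧ ∃ b ∈ BA, x = t • b})
    (corK : Set E)
    (hcorK : corK = {x ∈ K | ∀ v : E, ∃ ε > (0 : ℝ),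
      ∀ t ∈ Set.Icc (0 : ℝ) ε, x + t • v ∈ K})
    (SmK SA0 : Set E)
    (hSmK : SmK = convexHull ℝ (-BK))
    (hSA0 : SA0 = convexHull ℝ (BA ∪ {0}))
    (corSmK : Set E)
    (hcor : corSmK = {x ∈ SmK | ∀ v : E, ∃ ε > (0 : ℝ),
      ∀ t ∈ Set.Icc (0 : ℝ) ε, x + t • v ∈ SmK})
    (hsolid : corSmK.Nonempty)
    (hdisj : SA0 ∩ corSmK = ∅) :
    (∃ x' : E →ₗ[ℝ] ℝ, (∀ k ∈ K, 0 ≤ x' k) ∧ x' ≠ 0 ∧ ∃ α : ℝ, 0 ≤ α ∧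
      (∀ a ∈ A, 0 ≤ x' a + α * ψ a) ∧
      (∀ k : E, -k ∈ K → x' k + α * ψ k ≤ 0) ∧
      (∀ k : E, -k ∈ corK → x' k + α * ψ k < 0)) ∧
    A ∩ (-corK) = ∅ := by
  subst hcor hcorK
  obtain ⟨s₀, hs₀⟩ := hsolid
  let p := Seminorm.ofNonnegSMul ψ hψ_add hψ_smul hψ_symm
  have h0SA0 : (0 : E) ∈ SA0 := hSA0 ▸ subset_convexHull ℝ _ (Or.inr rfl)
  obtain ⟨g, c, hgK, hgA, hgs₀⟩ := geometric_hahn_banach_algCore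
    (hSmK ▸ convex_convexHull ℝ _) (hSA0 ▸ convex_convexHull ℝ _) hs₀ h0SA0
    (disjoint_iff_inter_eq_empty.2 (inter_comm SA0 _ ▸ hdisj))
  have hc : c ≤ 0 := by simpa using hgA 0 h0SA0
  have hK : ∀ x ∈ K, -c * ψ x ≤ g x := fun x hx =>
    mul_le_of_le_on_base p (hBK ▸ fun b hb => hb.2) (fun b hb => by
      linarith [g.map_neg b, hgK (-b) (hSmK ▸ subset_convexHull ℝ _ (neg_mem_neg.2 hb))])
      (hgenK.subset hx)
  have hA : ∀ x ∈ A, c * ψ x ≤ g x := fun x hx =>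
    mul_le_of_le_on_base p (hBA ▸ fun b hb => hb.2)
      (fun b hb => hgA b (hSA0 ▸ subset_convexHull ℝ _ (Or.inl hb))) (hgenA.subset hx)
  have hSmK_ball : SmK ⊆ p.closedBall 0 1 := hSmK ▸ convexHull_min
    (fun x hx => p.mem_closedBall_zero.2 (by rw [← map_neg_eq_map]; exact (hBK ▸ hx).2.le))
    (p.convex_closedBall 0 1)
  have hψs₀ : ψ s₀ ≤ 1 := p.mem_closedBall_zero.1 (hSmK_ball hs₀.1)
  have hcorK : ∀ k, -k ∈ algCore K → g k + -c * ψ k < 0 := fun k hk => by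
    have : -c * ψ (-k) < g (-k) := mul_lt_of_mem_algCore p (by linarith) hK (v := s₀)
      (by change g s₀ + -c * ψ s₀ < 0; linarith [mul_le_mul_of_nonpos_left hψs₀ hc]) hk
    rw [g.map_neg, hψ_symm] at this
    linarith
  refine ⟨⟨g, fun k hk => (mul_nonneg (by linarith) (apply_nonneg p k)).trans (hK k hk),
    fun hg => by simp [hg] at hgs₀; linarith, -c, by linarith,
    fun a ha => by linarith [hA a ha], fun k hk => ?_, hcorK⟩, ?_⟩
  · have := hK _ hk
    rw [g.map_neg, hψ_symm] at this
    linarith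
  · exact eq_empty_of_forall_notMem fun x ⟨hxA, hxK⟩ => by linarith [hcorK x hxK, hA x hxA]

/-- Proper cone separation theorem in a real linear space. -/
theorem stmt_17 {E : Type*} [AddCommGroup E] [Module ℝ E] (ψ : E → ℝ)
    (hψ_add : ∀ x y : E, ψ (x + y) ≤ ψ x + ψ y)
    (hψ_smul : ∀ t : ℝ, 0 ≤ t → ∀ x : E, ψ (t • x) = t * ψ x)
    (hψ_symm : ∀ x : E, ψ (-x) = ψ x)
    (K A : Set E)
    (hKne : K ≠ {0}) (hKneE : K ≠ Set.univ)
    (hAne : A ≠ {0}) (hAneE : A ≠ Set.univ)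
    (hψposK : ∀ x ∈ K, x ≠ 0 → 0 < ψ x)
    (hψposA : ∀ x ∈ A, x ≠ 0 → 0 < ψ x)
    (BK BA : Set E)
    (hBK : BK = {x ∈ K | ψ x = 1}) (hBA : BA = {x ∈ A | ψ x = 1})
    (hgenK : K = {x : E | ∃ t : ℝ, 0 ≤ t ∧ ∃ b ∈ BK, x = t • b})
    (hgenA : A = {x : E | ∃ t : ℝ, 0 ≤ t ∧ ∃ b ∈ BA, x = t • b})
    (corK : Set E)
    (hcorK : corK = {x ∈ K | ∀ v : E, ∃ ε > (0 : ℝ),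
      ∀ t ∈ Set.Icc (0 : ℝ) ε, x + t • v ∈ K})
    (hKsolid : corK.Nonempty)
    (SmK SA0 : Set E)
    (hSmK : SmK = convexHull ℝ (-BK))
    (hSA0 : SA0 = convexHull ℝ (BA ∪ {0}))
    (corSmK : Set E)
    (hcor : corSmK = {x ∈ SmK | ∀ v : E, ∃ ε > (0 : ℝ),
      ∀ t ∈ Set.Icc (0 : ℝ) ε, x + t • v ∈ SmK})
    (hsolid : corSmK.Nonempty)
    (hdisj : SA0 ∩ corSmK = ∅) :
    (∃ x' : E →ₗ[ℝ] ℝ, (∀ k ∈ K, 0 ≤ x' k) ∧ x' ≠ 0 ∧ ∃ α : ℝ, 0 ≤ α ∧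
      (∀ a ∈ A, 0 ≤ x' a + α * ψ a) ∧
      (∀ k : E, -k ∈ K → x' k + α * ψ k ≤ 0) ∧
      (∀ k : E, -k ∈ corK → x' k + α * ψ k < 0)) ∧
    A ∩ (-corK) = ∅ :=
  stmt_17_general ψ hψ_add hψ_smul hψ_symm K A BK BA hBK hBA hgenK hgenA corK hcorK SmK SA0 hSmK
    hSA0 corSmK hcor hsolid hdisj
end
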